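/- Let 0 < b < a. For every t > 0, one has -Φ_{a,b}'(t)/t² = ∫₀^∞ e^{-ts} η_{a,b}(s) ds, where Φ_{a,b}' denotes the derivative of Φ_{a,b}. -/

import Mathlib

open MeasureTheory Real Set

/-- `Φ_{a,b}(t) = (b-a) + (e^{-bt} - e^{-at})/(1 - e^{-t})`. -/
noncomputable def Phi (a b : ℝ) (t : ℝ) : ℝ :=
  (b - a) + (Real.exp (-b * t) - Real.exp (-a * t)) / (1 - Real.exp (-t))

/-- `η_{a,b}(s) = Σ_{k=0}^∞ ((b+k) max(s-k-b,0) - (a+k) max(s-k-a,0))`. -/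
noncomputable def eta (a b : ℝ) (s : ℝ) : ℝ :=
  ∑' k : ℕ, ((b + k) * max (s - k - b) 0 - (a + k) * max (s - k - a) 0)

lemma lap_lin (t : ℝ) (ht : 0 < t) : ∫ s in Ioi (0:ℝ), s * Real.exp (-(t*s)) = 1 / t^2 := by
  have h2 : ((1:ℝ)/t)^(2:ℝ) * Real.Gamma 2 = 1/t^2 := by
    rw [Real.Gamma_two, mul_one, show ((2:ℝ)) = ((2:ℕ):ℝ) by norm_num, Real.rpow_natCast,
      div_pow, one_pow]
  rw [← h2, ← integral_rpow_mul_exp_neg_mul_Ioi (by norm_num : (0:ℝ) < 2) ht]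
  refine setIntegral_congr_fun measurableSet_Ioi fun x hx => ?_
  rw [show (2:ℝ)-1=1 by norm_num, Real.rpow_one]

lemma int_lin (t : ℝ) (ht : 0 < t) : IntegrableOn (fun s => s * Real.exp (-(t*s))) (Ioi 0) := by
  have := integrableOn_rpow_mul_exp_neg_mul_rpow (by norm_num : (-1:ℝ) < 1) zero_lt_one ht
  refine this.congr_fun (fun x hx => ?_) measurableSet_Ioi
  simp [Real.rpow_one, hx]

lemma int_max (t c : ℝ) (ht : 0 < t) (hc : 0 ≤ c) :
    IntegrableOn (fun s => Real.exp (-(t*s)) * max (s - c) 0) (Ioi 0) := by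
  refine Integrable.mono (int_lin t ht) ?_ ?_
  · exact ((Real.continuous_exp.comp (continuous_const.mul continuous_id).neg).mul
      ((continuous_id.sub continuous_const).max continuous_const)).aestronglyMeasurable
  · filter_upwards [self_mem_ae_restrict (measurableSet_Ioi : MeasurableSet (Ioi (0:ℝ)))]
      with s hs
    have hs0 : 0 < s := hs
    rw [Real.norm_eq_abs, Real.norm_eq_abs, abs_of_nonneg (by positivity),
      abs_of_nonneg (by positivity)]
    have : max (s - c) 0 ≤ s := max_le (by linarith) hs0.le
    calc Real.exp (-(t*s)) * max (s-c) 0 ≤ Real.exp (-(t*s)) * s :=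
          mul_le_mul_of_nonneg_left this (Real.exp_pos _).le
      _ = s * Real.exp (-(t*s)) := mul_comm _ _

lemma lap_max (t c : ℝ) (ht : 0 < t) (hc : 0 ≤ c) :
    ∫ s in Ioi (0:ℝ), Real.exp (-(t*s)) * max (s - c) 0 = Real.exp (-(t*c)) / t^2 := by
  have h1 : ∀ s : ℝ, Real.exp (-(t*s)) * max (s - c) 0
      = Set.indicator (Ioi c) (fun s => Real.exp (-(t*s)) * (s - c)) s := by
    intro s
    by_cases h : c < s
    · rw [Set.indicator_of_mem (mem_Ioi.2 h), max_eq_left (by linarith)]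
    · rw [Set.indicator_of_notMem (by simpa using h), max_eq_right (by push_neg at h; linarith),
        mul_zero]
  simp_rw [h1]
  rw [setIntegral_indicator measurableSet_Ioi]
  have h2 : Ioi (0:ℝ) ∩ Ioi c = Ioi c := by
    rw [Set.inter_eq_right]; exact fun x hx => lt_of_le_of_lt hc hx
  rw [h2]
  have hemb : MeasurableEmbedding (fun x : ℝ => x + c) :=
    (MeasurableEquiv.addRight c).measurableEmbedding
  have hmp : MeasurePreserving (fun x : ℝ => x + c) volume volume :=
    measurePreserving_add_right volume c
  have h3 := hmp.setIntegral_preimage_emb hemb (fun s => Real.exp (-(t*s)) * (s - c)) (Ioi c)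
  have h4 : (fun x : ℝ => x + c) ⁻¹' (Ioi c) = Ioi 0 := by
    ext x; simp [lt_add_iff_pos_left]
  rw [h4] at h3
  rw [← h3]
  have : ∀ x ∈ Ioi (0:ℝ), Real.exp (-(t*(x+c))) * (x + c - c)
      = Real.exp (-(t*c)) * (x * Real.exp (-(t*x))) := by
    intro x hx
    rw [show -(t*(x+c)) = -(t*c) + -(t*x) by ring, Real.exp_add]
    ring
  rw [setIntegral_congr_fun measurableSet_Ioi this, integral_const_mul, lap_lin t ht]
  ring

lemma sum_shift (c u : ℝ) (hu0 : 0 ≤ u) (hu1 : u < 1) :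
    HasSum (fun k : ℕ => (c + k) * u^k) (c / (1-u) + u/(1-u)^2) := by
  have h1 : HasSum (fun k : ℕ => c * u^k) (c * (1-u)⁻¹) :=
    (hasSum_geometric_of_lt_one hu0 hu1).mul_left c
  have h2 : HasSum (fun k : ℕ => (k:ℝ) * u^k) (u/(1-u)^2) :=
    hasSum_coe_mul_geometric_of_norm_lt_one (by rwa [Real.norm_eq_abs, abs_of_nonneg hu0])
  have heq : (fun k : ℕ => (c+(k:ℝ))*u^k) = fun k : ℕ => c*u^k + (k:ℝ)*u^k := by
    funext k; ring
  rw [heq, show c/(1-u) = c*(1-u)⁻¹ from div_eq_mul_inv c _]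
  exact h1.add h2

lemma Phi_hasDeriv (a b t : ℝ) (ht : 0 < t) :
    HasDerivAt (Phi a b)
      ((((-b) * Real.exp (-b*t) - (-a) * Real.exp (-a*t)) * (1 - Real.exp (-t))
        - (Real.exp (-b*t) - Real.exp (-a*t)) * Real.exp (-t)) / (1 - Real.exp (-t))^2) t := by
  have hB : HasDerivAt (fun t => Real.exp (-b*t)) ((-b) * Real.exp (-b*t)) t := by
    simpa [mul_comm] using ((hasDerivAt_id t).const_mul (-b)).exp
  have hA : HasDerivAt (fun t => Real.exp (-a*t)) ((-a) * Real.exp (-a*t)) t := by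
    simpa [mul_comm] using ((hasDerivAt_id t).const_mul (-a)).exp
  have hu : HasDerivAt (fun t : ℝ => Real.exp (-t)) (-Real.exp (-t)) t := by
    simpa using ((hasDerivAt_id t).neg).exp
  have hM : HasDerivAt (fun t : ℝ => 1 - Real.exp (-t)) (Real.exp (-t)) t := by
    simpa using hu.const_sub 1
  have hne : 1 - Real.exp (-t) ≠ 0 := by
    have : Real.exp (-t) < 1 := Real.exp_lt_one_iff.2 (by linarith)
    linarith
  have := ((hasDerivAt_const t (b - a)).add (((hB.sub hA)).div hM hne))
  have hPhi : Phi a b = fun x => (b - a) + (Real.exp (-b*x) - Real.exp (-a*x)) / (1 - Real.exp (-x)) := rfl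
  rw [hPhi]
  simpa [Pi.add_def, Pi.sub_def, Pi.div_def] using this

theorem laplace_repr_neg_Phi_deriv_div_sq (a b : ℝ) (hb : 0 < b) (hba : b < a)
    (t : ℝ) (ht : 0 < t) :
    -(deriv (Phi a b) t) / t ^ 2 = ∫ s in Set.Ioi (0 : ℝ), Real.exp (-t * s) * eta a b s := by
  set u := Real.exp (-t) with hu_def
  have hu0 : 0 < u := Real.exp_pos _
  have hu1 : u < 1 := Real.exp_lt_one_iff.2 (by linarith)
  have hMne : 1 - u ≠ 0 := by linarith
  have htne : t ≠ 0 := ne_of_gt ht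
  -- the exponential power identity
  have hpow : ∀ (c:ℝ) (k:ℕ), Real.exp (-(t*((k:ℝ)+c))) = Real.exp (-(t*c)) * u^k := by
    intro c k
    rw [hu_def, ← Real.exp_nat_mul, ← Real.exp_add]
    congr 1; ring
  -- F k : the k-th term
  set F : ℕ → ℝ → ℝ := fun k s =>
    Real.exp (-t*s) * ((b+(k:ℝ)) * max (s-(k:ℝ)-b) 0 - (a+(k:ℝ)) * max (s-(k:ℝ)-a) 0) with hF_def
  have hrep : ∀ k : ℕ, F k = fun s =>
      (b+(k:ℝ)) * (Real.exp (-(t*s)) * max (s-((k:ℝ)+b)) 0)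
      - (a+(k:ℝ)) * (Real.exp (-(t*s)) * max (s-((k:ℝ)+a)) 0) := by
    intro k; funext s
    rw [hF_def]
    simp only [neg_mul, sub_sub]
    ring
  have hcb : ∀ k : ℕ, (0:ℝ) ≤ (k:ℝ) + b := fun k => add_nonneg (Nat.cast_nonneg k) hb.le
  have hca : ∀ k : ℕ, (0:ℝ) ≤ (k:ℝ) + a := fun k =>
    add_nonneg (Nat.cast_nonneg k) (hb.trans hba).le
  have hbk : ∀ k : ℕ, (0:ℝ) < b + (k:ℝ) := fun k =>
    add_pos_of_pos_of_nonneg hb (Nat.cast_nonneg k)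
  have hak : ∀ k : ℕ, (0:ℝ) < a + (k:ℝ) := fun k =>
    add_pos_of_pos_of_nonneg (hb.trans hba) (Nat.cast_nonneg k)
  -- integrability of each F k
  have hFint : ∀ k : ℕ, IntegrableOn (F k) (Ioi 0) := by
    intro k
    rw [hrep k]
    exact ((int_max t _ ht (hcb k)).const_mul _).sub ((int_max t _ ht (hca k)).const_mul _)
  -- value of each integral
  have hFval : ∀ k : ℕ, ∫ s in Ioi (0:ℝ), F k s
      = (b+(k:ℝ)) * (Real.exp (-(t*((k:ℝ)+b))) / t^2)
        - (a+(k:ℝ)) * (Real.exp (-(t*((k:ℝ)+a))) / t^2) := by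
    intro k
    rw [hrep k]
    rw [integral_sub ((int_max t _ ht (hcb k)).const_mul _) ((int_max t _ ht (hca k)).const_mul _),
      integral_const_mul, integral_const_mul, lap_max t _ ht (hcb k), lap_max t _ ht (hca k)]
  -- summability of integrals of norms
  have hGsum : ∀ c : ℝ, 0 < c → Summable (fun k : ℕ =>
      (c+(k:ℝ)) * (Real.exp (-(t*((k:ℝ)+c))) / t^2)) := by
    intro c hc
    have h := (sum_shift c u hu0.le hu1).summable.mul_right (Real.exp (-(t*c)) / t^2)
    refine h.congr fun k => ?_
    rw [hpow c k]
    ring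
  have hSb := hGsum b hb
  have hSa := hGsum a (hb.trans hba)
  have hnorm_le : ∀ k : ℕ, (∫ s in Ioi (0:ℝ), ‖F k s‖)
      ≤ (b+(k:ℝ)) * (Real.exp (-(t*((k:ℝ)+b))) / t^2)
        + (a+(k:ℝ)) * (Real.exp (-(t*((k:ℝ)+a))) / t^2) := by
    intro k
    have hint1 := (int_max t _ ht (hcb k)).const_mul (b+(k:ℝ))
    have hint2 := (int_max t _ ht (hca k)).const_mul (a+(k:ℝ))
    have hle : ∀ s : ℝ, ‖F k s‖
        ≤ (b+(k:ℝ)) * (Real.exp (-(t*s)) * max (s-((k:ℝ)+b)) 0)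
          + (a+(k:ℝ)) * (Real.exp (-(t*s)) * max (s-((k:ℝ)+a)) 0) := by
      intro s
      rw [hrep k]
      refine (norm_sub_le _ _).trans ?_
      rw [Real.norm_eq_abs, Real.norm_eq_abs,
        abs_of_nonneg (mul_nonneg (hbk k).le (mul_nonneg (Real.exp_pos _).le (le_max_right _ _))),
        abs_of_nonneg (mul_nonneg (hak k).le (mul_nonneg (Real.exp_pos _).le (le_max_right _ _)))]
    calc (∫ s in Ioi (0:ℝ), ‖F k s‖)
        ≤ ∫ s in Ioi (0:ℝ), ((b+(k:ℝ)) * (Real.exp (-(t*s)) * max (s-((k:ℝ)+b)) 0)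
          + (a+(k:ℝ)) * (Real.exp (-(t*s)) * max (s-((k:ℝ)+a)) 0)) :=
          integral_mono ((hFint k).norm) (hint1.add hint2) hle
      _ = _ := by
          rw [integral_add hint1 hint2, integral_const_mul, integral_const_mul,
            lap_max t _ ht (hcb k), lap_max t _ ht (hca k)]
  have hsum_norm : Summable (fun k : ℕ => ∫ s in Ioi (0:ℝ), ‖F k s‖) := by
    refine Summable.of_nonneg_of_le (fun k => integral_nonneg (fun s => norm_nonneg _))
      hnorm_le (hSb.add hSa)
  -- swap sum and integral
  have hswap : (∑' k : ℕ, ∫ s in Ioi (0:ℝ), F k s)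
      = ∫ s in Ioi (0:ℝ), ∑' k : ℕ, F k s :=
    integral_tsum_of_summable_integral_norm hFint hsum_norm
  -- the integrand matches
  have hinteg : ∀ s : ℝ, Real.exp (-t*s) * eta a b s = ∑' k : ℕ, F k s := by
    intro s
    rw [eta, ← tsum_mul_left]
  -- RHS = tsum
  have hRHS : (∫ s in Set.Ioi (0:ℝ), Real.exp (-t * s) * eta a b s)
      = ∑' k : ℕ, ((b+(k:ℝ)) * (Real.exp (-(t*((k:ℝ)+b))) / t^2)
        - (a+(k:ℝ)) * (Real.exp (-(t*((k:ℝ)+a))) / t^2)) := by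
    simp_rw [hinteg]
    rw [← hswap]
    exact tsum_congr hFval
  rw [hRHS]
  -- evaluate the tsum
  have hsb := (sum_shift b u hu0.le hu1).mul_right (Real.exp (-(t*b)) / t^2)
  have hsa := (sum_shift a u hu0.le hu1).mul_right (Real.exp (-(t*a)) / t^2)
  have htsum := (hsb.sub hsa).tsum_eq
  have hterm : ∀ k : ℕ,
      ((b+(k:ℝ)) * u^k * (Real.exp (-(t*b)) / t^2) - (a+(k:ℝ)) * u^k * (Real.exp (-(t*a)) / t^2))
      = ((b+(k:ℝ)) * (Real.exp (-(t*((k:ℝ)+b))) / t^2)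
        - (a+(k:ℝ)) * (Real.exp (-(t*((k:ℝ)+a))) / t^2)) := by
    intro k
    rw [hpow b k, hpow a k]; ring
  rw [← tsum_congr hterm, htsum]
  -- evaluate the derivative
  have hD := (Phi_hasDeriv a b t ht).deriv
  rw [hD]
  have hBe : Real.exp (-b*t) = Real.exp (-(t*b)) := by ring_nf
  have hAe : Real.exp (-a*t) = Real.exp (-(t*a)) := by ring_nf
  rw [hBe, hAe, ← hu_def]
  field_simp
  ring
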